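/- For any two deductive arguments I and J, if I is a direct undercut of J, then it is not the case that Claim(I) ⊢ Claim(J). -/
import Mathlib


inductive PropForm (α : Type) : Type
  | atom : α → PropForm α
  | fals : PropForm α
  | imp : PropForm α → PropForm α → PropForm α

namespace PropForm

def eval {α : Type} (v : α → Prop) : PropForm α → Prop
  | atom a => v a
  | fals => False
  | imp p q => eval v p → eval v q

end PropForm

/-- `v` satisfies every formula in `S`. -/
def Models {α : Type} (v : α → Prop) (S : Set (PropForm α)) : Prop :=
  ∀ φ ∈ S, φ.eval v

/-- Classical (semantic) consequence: `S ⊢ ψ`. -/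
def Entails {α : Type} (S : Set (PropForm α)) (ψ : PropForm α) : Prop :=
  ∀ v : α → Prop, Models v S → ψ.eval v

/-- `S ⊬ ⊥`. -/
def Consistent {α : Type} (S : Set (PropForm α)) : Prop :=
  ∃ v : α → Prop, Models v S

/-- A deductive argument `⟨Φ,α⟩`: `Φ` consistent, `Φ ⊢ α`, `Φ` minimal. -/
structure Argument (α : Type) where
  support : Finset (PropForm α)
  claim : PropForm α
  con : Consistent (support : Set (PropForm α))
  ent : Entails (support : Set (PropForm α)) claim
  min : ∀ Ψ : Finset (PropForm α), Ψ ⊂ support → ¬ Entails (Ψ : Set (PropForm α)) claim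

/-- `Claim(I) ⊢ ¬⋀Support(J)`. -/
def Defeater {α : Type} (I J : Argument α) : Prop :=
  ∀ v : α → Prop, I.claim.eval v → ¬ Models v (J.support : Set (PropForm α))

/-- `Claim(I) ≡ ¬⋀Ψ` for some `Ψ ⊆ Support(J)`. -/
def Undercut {α : Type} (I J : Argument α) : Prop :=
  ∃ Ψ : Finset (PropForm α), Ψ ⊆ J.support ∧
    ∀ v : α → Prop, I.claim.eval v ↔ ¬ Models v (Ψ : Set (PropForm α))

/-- `Claim(I) ≡ ¬φ` for some `φ ∈ Support(J)`. -/
def DirectUndercut {α : Type} (I J : Argument α) : Prop :=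
  ∃ φ ∈ J.support, ∀ v : α → Prop, I.claim.eval v ↔ ¬ φ.eval v

/-- `Claim(I) ≡ ¬⋀Support(J)`. -/
def CanonicalUndercut {α : Type} (I J : Argument α) : Prop :=
  ∀ v : α → Prop, I.claim.eval v ↔ ¬ Models v (J.support : Set (PropForm α))

/-- `Claim(I) ⊢ ¬Claim(J)`. -/
def DefeatingRebuttal {α : Type} (I J : Argument α) : Prop :=
  ∀ v : α → Prop, I.claim.eval v → ¬ J.claim.eval v

inductive Lbl | pos | neg | amb
deriving DecidableEq

/-- An instantiated bipolar argument graph. -/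
structure IBAG (ν α : Type) where
  arc : ν → ν → Prop
  lbl : ν → ν → Lbl
  inst : ν → Argument α

namespace IBAG

variable {ν α : Type}

def NEG1 (G : IBAG ν α) : Prop :=
  ∀ A B, G.arc A B → G.lbl A B = Lbl.neg →
    ¬ Entails {(G.inst A).claim} (G.inst B).claim

def NEG2 (G : IBAG ν α) : Prop :=
  ∀ A B, G.arc A B → G.lbl A B = Lbl.neg →
    ∀ φ ∈ (G.inst B).support, ¬ Entails {(G.inst A).claim} φ

def NEG3 (G : IBAG ν α) : Prop :=
  ∀ A B, G.arc A B → G.lbl A B = Lbl.neg →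
    ¬ Consistent ({(G.inst A).claim} ∪ ((G.inst B).support : Set (PropForm α)))

def NEG4 (G : IBAG ν α) : Prop :=
  ∀ A B C, G.arc A B → G.lbl A B = Lbl.neg →
    Entails {(G.inst C).claim} (G.inst A).claim →
    G.arc C B ∧ G.lbl C B = Lbl.neg

def NEG5 (G : IBAG ν α) : Prop :=
  ∀ A B C, G.arc A B → G.lbl A B = Lbl.neg →
    (G.inst B).support ⊆ (G.inst C).support →
    G.arc A C ∧ G.lbl A C = Lbl.neg

def NEG6 (G : IBAG ν α) : Prop :=
  ∀ A B C, G.arc A B → G.lbl A B = Lbl.neg →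
    Entails {(G.inst C).claim} (G.inst A).claim →
    G.arc C B → G.lbl C B ≠ Lbl.pos

def NEG7 (G : IBAG ν α) : Prop :=
  ∀ A B C, G.arc A B → G.lbl A B = Lbl.neg →
    (G.inst B).support ⊆ (G.inst C).support →
    G.arc A C → G.lbl A C ≠ Lbl.pos

def POS1 (G : IBAG ν α) : Prop :=
  ∀ A B, G.arc A B → G.lbl A B = Lbl.pos →
    Consistent (((G.inst A).support : Set (PropForm α)) ∪ ((G.inst B).support : Set (PropForm α)))

def POS2 (G : IBAG ν α) : Prop :=
  ∀ A B, G.arc A B → G.lbl A B = Lbl.pos →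
    Consistent ({(G.inst A).claim} ∪ ((G.inst B).support : Set (PropForm α)))

def POS3 (G : IBAG ν α) : Prop :=
  ∀ A B, G.arc A B → G.lbl A B = Lbl.pos →
    ∃ φ ∈ (G.inst B).support, (G.inst A).claim = φ

def POS4 (G : IBAG ν α) : Prop :=
  ∀ A B, G.arc A B → G.lbl A B = Lbl.pos →
    ∃ Γ : Finset (PropForm α), Γ ⊆ (G.inst B).support ∧
      ∀ v : α → Prop, (G.inst A).claim.eval v → Models v (Γ : Set (PropForm α))

def POS5 (G : IBAG ν α) : Prop :=
  ∀ A B, G.arc A B → G.lbl A B = Lbl.pos →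
    (∀ v : α → Prop, (G.inst A).claim.eval v → Models v ((G.inst B).support : Set (PropForm α))) ∧
      (G.inst B).support ≠ ∅

def POS6 (G : IBAG ν α) : Prop :=
  ∀ A B C, G.arc A B → G.lbl A B = Lbl.pos →
    Entails {(G.inst C).claim} (G.inst A).claim →
    G.arc C B ∧ G.lbl C B = Lbl.pos

def POS7 (G : IBAG ν α) : Prop :=
  ∀ A B C, G.arc A B → G.lbl A B = Lbl.pos →
    (G.inst B).support ⊆ (G.inst C).support →
    G.arc A C ∧ G.lbl A C = Lbl.pos

def POS8 (G : IBAG ν α) : Prop :=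
  ∀ A B C, G.arc A B → G.lbl A B = Lbl.pos →
    G.arc C B → Entails {(G.inst C).claim} (G.inst A).claim →
    G.lbl C B ≠ Lbl.neg

def POS9 (G : IBAG ν α) : Prop :=
  ∀ A B C, G.arc A B → G.lbl A B = Lbl.pos →
    G.arc A C → (G.inst B).support ⊆ (G.inst C).support →
    G.lbl A C ≠ Lbl.neg

def INC1 (G : IBAG ν α) : Prop :=
  ∀ A B, ¬ Consistent ({(G.inst A).claim} ∪ ((G.inst B).support : Set (PropForm α))) →
    G.arc A B ∧ G.lbl A B = Lbl.neg

def INC2 (G : IBAG ν α) : Prop :=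
  ∀ A B, ¬ Consistent ({(G.inst A).claim} ∪ ((G.inst B).support : Set (PropForm α))) →
    G.arc A B ∧ G.lbl A B ≠ Lbl.pos

def INC3 (G : IBAG ν α) : Prop :=
  ∀ A B, ¬ Consistent ({(G.inst A).claim} ∪ ((G.inst B).support : Set (PropForm α))) →
    G.arc A B → G.lbl A B ≠ Lbl.pos

def SUP1 (G : IBAG ν α) : Prop :=
  ∀ A B, (∃ φ ∈ (G.inst B).support, (G.inst A).claim = φ) →
    G.arc A B ∧ G.lbl A B = Lbl.pos

def SUP2 (G : IBAG ν α) : Prop :=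
  ∀ A B, (∃ Γ : Finset (PropForm α), Γ.Nonempty ∧ Γ ⊆ (G.inst B).support ∧
      ∀ v : α → Prop, (G.inst A).claim.eval v → Models v (Γ : Set (PropForm α))) →
    G.arc A B ∧ G.lbl A B = Lbl.pos

def SUP3 (G : IBAG ν α) : Prop :=
  ∀ A B, (∃ φ ∈ (G.inst B).support, (G.inst A).claim = φ) →
    G.arc A B ∧ G.lbl A B ≠ Lbl.neg

def SUP4 (G : IBAG ν α) : Prop :=
  ∀ A B, (∃ Γ : Finset (PropForm α), Γ.Nonempty ∧ Γ ⊆ (G.inst B).support ∧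
      ∀ v : α → Prop, (G.inst A).claim.eval v → Models v (Γ : Set (PropForm α))) →
    G.arc A B ∧ G.lbl A B ≠ Lbl.neg

def SUP5 (G : IBAG ν α) : Prop :=
  ∀ A B, (∃ φ ∈ (G.inst B).support, Entails {(G.inst A).claim} φ) →
    G.arc A B → G.lbl A B ≠ Lbl.neg

def SUP6 (G : IBAG ν α) : Prop :=
  ∀ A B, (∃ Γ : Finset (PropForm α), Γ.Nonempty ∧ Γ ⊆ (G.inst B).support ∧
      ∀ v : α → Prop, (G.inst A).claim.eval v → Models v (Γ : Set (PropForm α))) →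
    G.arc A B → G.lbl A B ≠ Lbl.neg

/-- `Args(Δ)`: all deductive arguments whose support comes from `Δ`. -/
def ArgsOf {α : Type} (Δ : Finset (PropForm α)) : Set (Argument α) :=
  {I : Argument α | I.support ⊆ Δ}

/-- The set of instantiated arguments of the graph. -/
def Codomain (G : IBAG ν α) : Set (Argument α) := Set.range G.inst

def Uses (G : IBAG ν α) (Δ : Finset (PropForm α)) : Prop :=
  G.Codomain ⊆ ArgsOf Δ

def Exhausts (G : IBAG ν α) (Δ : Finset (PropForm α)) : Prop :=
  G.Codomain = ArgsOf Δ

/-- All formulae occurring in the supports of instantiated arguments. -/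
def Inform (G : IBAG ν α) : Set (PropForm α) :=
  {φ | ∃ I ∈ G.Codomain, φ ∈ I.support}

def Displays (G : IBAG ν α) (Δ : Finset (PropForm α)) : Prop :=
  (↑Δ : Set (PropForm α)) = G.Inform

end IBAG


theorem directUndercut_claim_not_entails_claim {α : Type}
    (I J : Argument α) (h : DirectUndercut I J) :
    ¬ Entails {I.claim} J.claim := by
  obtain ⟨φ, hφ, hiff⟩ := h
  intro hent
  classical
  have hsub : J.support.erase φ ⊂ J.support := Finset.erase_ssubset hφ
  have hmin := J.min _ hsub
  rw [Entails] at hmin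
  push_neg at hmin
  obtain ⟨v, hv, hnc⟩ := hmin
  by_cases hφv : φ.eval v
  · exact hnc (J.ent v (fun ψ hψ => by
      by_cases hψφ : ψ = φ
      · exact hψφ ▸ hφv
      · exact hv ψ (Finset.mem_coe.2 (Finset.mem_erase.2 ⟨hψφ, Finset.mem_coe.1 hψ⟩))))
  · have hI : I.claim.eval v := (hiff v).2 hφv
    exact hnc (hent v (fun ψ hψ => by
      have hh : ψ = I.claim := hψ
      exact hh ▸ hI))
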